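/- (Monotonicity of embedding-complexity divergence under layer division) Suppose every hypothesis decomposes as h = f_j ∘ q ∘ g_i where g_i ∈ G_i, q ∈ Q, f_j ∈ F_j, with G_j = {q ∘ g : q ∈ Q, g ∈ G_i} and F_i = {f ∘ q : f ∈ F_j, q ∈ Q}. Then d_{(F_i)_{G_iΔG_i}}(p_S, p_T) ≤ d_{(F_j)_{G_jΔG_j}}(p_S, p_T), where d_{F_{GΔG}}(p_S, p_T) = sup_{f ∈ F; g, g' ∈ G} |R_S(f∘g, f∘g') − R_T(f∘g, f∘g')|. -/
import Mathlib


open MeasureTheory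

/-- Zero-one disagreement risk between two hypotheses under distribution `p`. -/
noncomputable def risk {X : Type*} [MeasurableSpace X] (p : Measure X)
    (h h' : X → Bool) : ℝ :=
  ∫ x, (if h x = h' x then (0 : ℝ) else 1) ∂p

lemma risk_nonneg {X : Type*} [MeasurableSpace X] (p : Measure X)
    (h h' : X → Bool) : 0 ≤ risk p h h' := by
  apply integral_nonneg
  intro x; dsimp; split <;> norm_num

lemma risk_le_one {X : Type*} [MeasurableSpace X] (p : Measure X)
    [IsProbabilityMeasure p] (h h' : X → Bool) : risk p h h' ≤ 1 := by
  unfold risk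
  by_cases hi : Integrable (fun x => (if h x = h' x then (0 : ℝ) else 1)) p
  · calc ∫ x, (if h x = h' x then (0 : ℝ) else 1) ∂p ≤ ∫ _x, (1 : ℝ) ∂p := by
          apply integral_mono hi (integrable_const 1)
          intro x; dsimp; split <;> norm_num
       _ = 1 := by simp
  · rw [integral_undef hi]; norm_num

lemma abs_risk_sub_le_one {X : Type*} [MeasurableSpace X] (pS pT : Measure X)
    [IsProbabilityMeasure pS] [IsProbabilityMeasure pT] (h h' : X → Bool) :
    |risk pS h h' - risk pT h h'| ≤ 1 := by
  rw [abs_le]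
  constructor <;>
    nlinarith [risk_nonneg pS h h', risk_le_one pS h h', risk_nonneg pT h h',
      risk_le_one pT h h']

/-- Proposition 7 (first inequality): monotonicity of the embedding-complexity divergence. -/
theorem embedding_divergence_monotone {X Zi Zj : Type*} [MeasurableSpace X]
    (pS pT : Measure X) [IsProbabilityMeasure pS] [IsProbabilityMeasure pT]
    (Gi : Set (X → Zi)) (Q : Set (Zi → Zj)) (Fj : Set (Zj → Bool))
    (hGi : Gi.Nonempty) (hQ : Q.Nonempty) (hFj : Fj.Nonempty) :
    (⨆ f : Set.image2 (· ∘ ·) Fj Q, ⨆ g : Gi, ⨆ g' : Gi,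
      |risk pS ((f : Zi → Bool) ∘ (g : X → Zi)) ((f : Zi → Bool) ∘ (g' : X → Zi)) -
        risk pT ((f : Zi → Bool) ∘ (g : X → Zi)) ((f : Zi → Bool) ∘ (g' : X → Zi))|) ≤
    (⨆ f : Fj, ⨆ g : Set.image2 (· ∘ ·) Q Gi, ⨆ g' : Set.image2 (· ∘ ·) Q Gi,
      |risk pS ((f : Zj → Bool) ∘ (g : X → Zj)) ((f : Zj → Bool) ∘ (g' : X → Zj)) -
        risk pT ((f : Zj → Bool) ∘ (g : X → Zj)) ((f : Zj → Bool) ∘ (g' : X → Zj))|) := by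
  have bdd1 : ∀ (h h' : X → Bool), |risk pS h h' - risk pT h h'| ≤ 1 :=
    abs_risk_sub_le_one pS pT
  -- bddAbove facts for the RHS nested sups
  have bA2 : ∀ (f : Zj → Bool) (g : X → Zj),
      BddAbove (Set.range fun g' : Set.image2 (· ∘ ·) Q Gi =>
        |risk pS (f ∘ g) (f ∘ (g' : X → Zj)) - risk pT (f ∘ g) (f ∘ (g' : X → Zj))|) := by
    intro f g
    exact ⟨1, by rintro _ ⟨g', rfl⟩; exact bdd1 _ _⟩
  have bA1 : ∀ (f : Zj → Bool),
      BddAbove (Set.range fun g : Set.image2 (· ∘ ·) Q Gi =>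
        ⨆ g' : Set.image2 (· ∘ ·) Q Gi,
          |risk pS (f ∘ (g : X → Zj)) (f ∘ (g' : X → Zj)) -
            risk pT (f ∘ (g : X → Zj)) (f ∘ (g' : X → Zj))|) := by
    intro f
    refine ⟨1, ?_⟩
    rintro _ ⟨g, rfl⟩
    exact Real.iSup_le (fun g' => bdd1 _ _) zero_le_one
  have bA0 : BddAbove (Set.range fun f : Fj =>
      ⨆ g : Set.image2 (· ∘ ·) Q Gi, ⨆ g' : Set.image2 (· ∘ ·) Q Gi,
        |risk pS ((f : Zj → Bool) ∘ (g : X → Zj)) ((f : Zj → Bool) ∘ (g' : X → Zj)) -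
          risk pT ((f : Zj → Bool) ∘ (g : X → Zj)) ((f : Zj → Bool) ∘ (g' : X → Zj))|) := by
    refine ⟨1, ?_⟩
    rintro _ ⟨f, rfl⟩
    exact Real.iSup_le (fun g =>
      Real.iSup_le (fun g' => bdd1 _ _) zero_le_one) zero_le_one
  apply Real.iSup_le ?_ ?_
  · rintro ⟨f, hf⟩
    obtain ⟨fj, hfj, q, hq, rfl⟩ := hf
    apply Real.iSup_le ?_ ?_
    · rintro ⟨g, hg⟩
      apply Real.iSup_le ?_ ?_
      · rintro ⟨g', hg'⟩
        have hqg : q ∘ g ∈ Set.image2 (· ∘ ·) Q Gi := ⟨q, hq, g, hg, rfl⟩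
        have hqg' : q ∘ g' ∈ Set.image2 (· ∘ ·) Q Gi := ⟨q, hq, g', hg', rfl⟩
        have key : |risk pS ((fj ∘ q) ∘ g) ((fj ∘ q) ∘ g') -
            risk pT ((fj ∘ q) ∘ g) ((fj ∘ q) ∘ g')| =
            |risk pS (fj ∘ (q ∘ g)) (fj ∘ (q ∘ g')) -
            risk pT (fj ∘ (q ∘ g)) (fj ∘ (q ∘ g'))| := rfl
        rw [key]
        refine le_trans (le_ciSup (bA2 fj (q ∘ g)) ⟨q ∘ g', hqg'⟩) ?_
        refine le_trans (le_ciSup (bA1 fj) ⟨q ∘ g, hqg⟩) ?_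
        exact le_ciSup bA0 ⟨fj, hfj⟩
      · -- 0 ≤ RHS : need sup nonneg
        obtain ⟨f0, hf0⟩ := hFj
        obtain ⟨q0, hq0⟩ := hQ
        obtain ⟨g0, hg0⟩ := hGi
        have h0 : q0 ∘ g0 ∈ Set.image2 (· ∘ ·) Q Gi := ⟨q0, hq0, g0, hg0, rfl⟩
        refine le_trans (abs_nonneg (risk pS (f0 ∘ (q0 ∘ g0)) (f0 ∘ (q0 ∘ g0)) -
          risk pT (f0 ∘ (q0 ∘ g0)) (f0 ∘ (q0 ∘ g0)))) ?_
        refine le_trans (le_ciSup (bA2 f0 (q0 ∘ g0)) ⟨q0 ∘ g0, h0⟩) ?_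
        refine le_trans (le_ciSup (bA1 f0) ⟨q0 ∘ g0, h0⟩) ?_
        exact le_ciSup bA0 ⟨f0, hf0⟩
    · obtain ⟨f0, hf0⟩ := hFj
      obtain ⟨q0, hq0⟩ := hQ
      obtain ⟨g0, hg0⟩ := hGi
      have h0 : q0 ∘ g0 ∈ Set.image2 (· ∘ ·) Q Gi := ⟨q0, hq0, g0, hg0, rfl⟩
      refine le_trans (abs_nonneg (risk pS (f0 ∘ (q0 ∘ g0)) (f0 ∘ (q0 ∘ g0)) -
        risk pT (f0 ∘ (q0 ∘ g0)) (f0 ∘ (q0 ∘ g0)))) ?_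
      refine le_trans (le_ciSup (bA2 f0 (q0 ∘ g0)) ⟨q0 ∘ g0, h0⟩) ?_
      refine le_trans (le_ciSup (bA1 f0) ⟨q0 ∘ g0, h0⟩) ?_
      exact le_ciSup bA0 ⟨f0, hf0⟩
  · obtain ⟨f0, hf0⟩ := hFj
    obtain ⟨q0, hq0⟩ := hQ
    obtain ⟨g0, hg0⟩ := hGi
    have h0 : q0 ∘ g0 ∈ Set.image2 (· ∘ ·) Q Gi := ⟨q0, hq0, g0, hg0, rfl⟩
    refine le_trans (abs_nonneg (risk pS (f0 ∘ (q0 ∘ g0)) (f0 ∘ (q0 ∘ g0)) -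
      risk pT (f0 ∘ (q0 ∘ g0)) (f0 ∘ (q0 ∘ g0)))) ?_
    refine le_trans (le_ciSup (bA2 f0 (q0 ∘ g0)) ⟨q0 ∘ g0, h0⟩) ?_
    refine le_trans (le_ciSup (bA1 f0) ⟨q0 ∘ g0, h0⟩) ?_
    exact le_ciSup bA0 ⟨f0, hf0⟩
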